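/- For every n ≥ 6, the number of n-queens configurations fixed by the 90° rotation r is divisible by 4; that is, |F_r| ≡ 0 (mod 4). -/
import Mathlib


open scoped Classical

/-- The `n × n` board, with squares indexed by `[n] × [n]` where `[n] = {1, …, n}`. -/
def board (n : ℕ) : Finset (ℕ × ℕ) := Finset.Icc 1 n ×ˢ Finset.Icc 1 n

/-- `Q` is an `n`-queens configuration: `Q ⊆ [n] × [n]`, `|Q| = n`, and every row,
column, diagonal (`j - i + n = k`) and anti-diagonal (`i + j - 1 = k`) contains at
most one element of `Q`. -/
def IsQueensConfig (n : ℕ) (Q : Finset (ℕ × ℕ)) : Prop :=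
  Q ⊆ board n ∧ Q.card = n ∧
  (∀ p ∈ Q, ∀ q ∈ Q, p.1 = q.1 → p = q) ∧
  (∀ p ∈ Q, ∀ q ∈ Q, p.2 = q.2 → p = q) ∧
  (∀ p ∈ Q, ∀ q ∈ Q, p.2 + n - p.1 = q.2 + n - q.1 → p = q) ∧
  (∀ p ∈ Q, ∀ q ∈ Q, p.1 + p.2 - 1 = q.1 + q.2 - 1 → p = q)

/-- `Q(n)`: the number of `n`-queens configurations. -/
noncomputable def queensCount (n : ℕ) : ℕ :=
  ((board n).powerset.filter (fun Q => IsQueensConfig n Q)).card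

/-- The vertical reflection `s`, `sQ = {(i, n+1-j) : (i,j) ∈ Q}`. -/
def sAct (n : ℕ) (Q : Finset (ℕ × ℕ)) : Finset (ℕ × ℕ) :=
  Q.image (fun p => (p.1, n + 1 - p.2))

/-- The 90° counter-clockwise rotation `r`, `rQ = {(n+1-j, i) : (i,j) ∈ Q}`. -/
def rAct (n : ℕ) (Q : Finset (ℕ × ℕ)) : Finset (ℕ × ℕ) :=
  Q.image (fun p => (n + 1 - p.2, p.1))

/-- The dihedral group `D₄ = {r^k s^b : k ∈ Fin 4, b ∈ Bool}` acting on subsets of the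
board; the element `(k, b)` acts by `Q ↦ r^k (s^b Q)` (rightmost map applied first). -/
def d4Act (n : ℕ) (x : Fin 4 × Bool) (Q : Finset (ℕ × ℕ)) : Finset (ℕ × ℕ) :=
  (rAct n)^[(x.1 : ℕ)] (if x.2 then sAct n Q else Q)

/-- The `D₄`-orbit of `Q`, i.e. `{xQ : x ∈ D₄}`. -/
def d4Orbit (n : ℕ) (Q : Finset (ℕ × ℕ)) : Finset (Finset (ℕ × ℕ)) :=
  Finset.univ.image (fun x : Fin 4 × Bool => d4Act n x Q)

/-- `F_r`: the set of `n`-queens configurations fixed by the rotation `r`. -/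
noncomputable def Fr (n : ℕ) : Finset (Finset (ℕ × ℕ)) :=
  (board n).powerset.filter (fun Q => IsQueensConfig n Q ∧ rAct n Q = Q)

/-- `F_{r² ∖ r}`: the `n`-queens configurations fixed by `r²` but not by `r`. -/
noncomputable def Fr2 (n : ℕ) : Finset (Finset (ℕ × ℕ)) :=
  (board n).powerset.filter
    (fun Q => IsQueensConfig n Q ∧ rAct n (rAct n Q) = Q ∧ rAct n Q ≠ Q)

/-- `F_e`: the `n`-queens configurations fixed by no non-identity element of `D₄`. -/
noncomputable def Fe (n : ℕ) : Finset (Finset (ℕ × ℕ)) :=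
  (board n).powerset.filter
    (fun Q => IsQueensConfig n Q ∧
      ∀ x : Fin 4 × Bool, x ≠ ((0 : Fin 4), false) → d4Act n x Q ≠ Q)

namespace QA
open Finset

/-- the reflection map on points -/
def fS (n : ℕ) (p : ℕ × ℕ) : ℕ × ℕ := (p.1, n + 1 - p.2)
/-- the rotation map on points -/
def fR (n : ℕ) (p : ℕ × ℕ) : ℕ × ℕ := (n + 1 - p.2, p.1)
/-- the border-flip map on points -/
noncomputable def fT (n : ℕ) (p : ℕ × ℕ) : ℕ × ℕ :=
  if p.1 = 1 ∨ p.1 = n ∨ p.2 = 1 ∨ p.2 = n then (p.1, n + 1 - p.2) else p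

/-- the border-flip action on configurations -/
noncomputable def tAct (n : ℕ) (Q : Finset (ℕ × ℕ)) : Finset (ℕ × ℕ) :=
  Q.image (fT n)

lemma sAct_eq (n : ℕ) (Q : Finset (ℕ × ℕ)) : sAct n Q = Q.image (fS n) := rfl
lemma rAct_eq (n : ℕ) (Q : Finset (ℕ × ℕ)) : rAct n Q = Q.image (fR n) := rfl

lemma mem_board {n : ℕ} {p : ℕ × ℕ} :
    p ∈ board n ↔ 1 ≤ p.1 ∧ p.1 ≤ n ∧ 1 ≤ p.2 ∧ p.2 ≤ n := by
  simp [board, Finset.mem_product, Finset.mem_Icc]; tauto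

lemma mem_Fr {n : ℕ} {Q : Finset (ℕ × ℕ)} :
    Q ∈ Fr n ↔ IsQueensConfig n Q ∧ rAct n Q = Q := by
  simp only [Fr, Finset.mem_filter, Finset.mem_powerset, and_iff_right_iff_imp]
  exact fun h => h.1.1

lemma fS_board {n : ℕ} {p : ℕ × ℕ} (hp : p ∈ board n) : fS n p ∈ board n := by
  rw [mem_board] at hp ⊢; unfold fS; omega

lemma fT_board {n : ℕ} {p : ℕ × ℕ} (hp : p ∈ board n) : fT n p ∈ board n := by
  rw [mem_board] at hp ⊢; unfold fT; split <;> omega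

lemma fS_fS {n : ℕ} {p : ℕ × ℕ} (hp : p ∈ board n) : fS n (fS n p) = p := by
  rw [mem_board] at hp
  obtain ⟨i, j⟩ := p
  unfold fS
  exact Prod.ext_iff.mpr ⟨rfl, by omega⟩

lemma fT_fT {n : ℕ} {p : ℕ × ℕ} (hp : p ∈ board n) : fT n (fT n p) = p := by
  rw [mem_board] at hp
  obtain ⟨i, j⟩ := p
  unfold fT
  split
  · split
    · exact Prod.ext_iff.mpr ⟨rfl, by omega⟩
    · omega
  · rfl

lemma fT_fS_comm {n : ℕ} {p : ℕ × ℕ} (hp : p ∈ board n) :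
    fT n (fS n p) = fS n (fT n p) := by
  rw [mem_board] at hp
  obtain ⟨i, j⟩ := p
  unfold fT fS
  split
  · split
    · rfl
    · omega
  · split
    · omega
    · rfl

lemma fT_fst {n : ℕ} (p : ℕ × ℕ) : (fT n p).1 = p.1 := by
  unfold fT; split <;> rfl

/-- membership facts from the rotation symmetry -/
lemma mem_rot {n : ℕ} {Q : Finset (ℕ × ℕ)} (hr : rAct n Q = Q) (hb : Q ⊆ board n)
    {i j : ℕ} (hp : (i, j) ∈ Q) :
    (n + 1 - j, i) ∈ Q ∧ (n + 1 - i, n + 1 - j) ∈ Q ∧ (j, n + 1 - i) ∈ Q := by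
  have hbd : 1 ≤ i ∧ i ≤ n ∧ 1 ≤ j ∧ j ≤ n := mem_board.mp (hb hp)
  have h1 : (n + 1 - j, i) ∈ Q := by
    rw [← hr]; exact Finset.mem_image_of_mem _ hp
  have h2 : (n + 1 - i, n + 1 - j) ∈ Q := by
    rw [← hr]; exact Finset.mem_image_of_mem _ h1
  have h3 : (n + 1 - (n + 1 - j), n + 1 - i) ∈ Q := by
    rw [← hr]; exact Finset.mem_image_of_mem _ h2
  have e : n + 1 - (n + 1 - j) = j := by omega
  rw [e] at h3
  exact ⟨h1, h2, h3⟩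

section acts
variable {n : ℕ} {Q : Finset (ℕ × ℕ)}

lemma sAct_board (hb : Q ⊆ board n) : sAct n Q ⊆ board n := by
  rw [sAct_eq]
  exact Finset.image_subset_iff.mpr fun p hp => fS_board (hb hp)

lemma tAct_board (hb : Q ⊆ board n) : tAct n Q ⊆ board n := by
  exact Finset.image_subset_iff.mpr fun p hp => fT_board (hb hp)

lemma sAct_sAct (hb : Q ⊆ board n) : sAct n (sAct n Q) = Q := by
  rw [sAct_eq, sAct_eq, Finset.image_image]
  have : Finset.image (fS n ∘ fS n) Q = Finset.image id Q :=
    Finset.image_congr fun p hp => fS_fS (hb hp)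
  rw [this, Finset.image_id]

lemma tAct_tAct (hb : Q ⊆ board n) : tAct n (tAct n Q) = Q := by
  unfold tAct
  rw [Finset.image_image]
  have : Finset.image (fT n ∘ fT n) Q = Finset.image id Q :=
    Finset.image_congr fun p hp => fT_fT (hb hp)
  rw [this, Finset.image_id]

lemma tAct_sAct_comm (hb : Q ⊆ board n) : tAct n (sAct n Q) = sAct n (tAct n Q) := by
  unfold tAct
  rw [sAct_eq, sAct_eq, Finset.image_image, Finset.image_image]
  exact Finset.image_congr fun p hp => fT_fS_comm (hb hp)

lemma sAct_card (hb : Q ⊆ board n) : (sAct n Q).card = Q.card := by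
  rw [sAct_eq]
  apply Finset.card_image_of_injOn
  intro a ha b hb' he
  calc a = fS n (fS n a) := (fS_fS (hb ha)).symm
    _ = fS n (fS n b) := by rw [he]
    _ = b := fS_fS (hb hb')

lemma tAct_card (hb : Q ⊆ board n) : (tAct n Q).card = Q.card := by
  apply Finset.card_image_of_injOn
  intro a ha b hb' he
  calc a = fT n (fT n a) := (fT_fT (hb ha)).symm
    _ = fT n (fT n b) := by rw [he]
    _ = b := fT_fT (hb hb')


lemma s_mem_Fr (h : Q ∈ Fr n) : sAct n Q ∈ Fr n := by
  obtain ⟨⟨hQb, hcard, hrow, hcol, hdiag, hanti⟩, hr⟩ := mem_Fr.mp h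
  have hsb : sAct n Q ⊆ board n := sAct_board hQb
  refine mem_Fr.mpr ⟨⟨hsb, by rw [sAct_card hQb, hcard], ?_, ?_, ?_, ?_⟩, ?_⟩
  · intro p' hp' q' hq' he
    obtain ⟨p, hp, rfl⟩ := Finset.mem_image.mp hp'
    obtain ⟨q, hq, rfl⟩ := Finset.mem_image.mp hq'
    rw [hrow p hp q hq he]
  · intro p' hp' q' hq' he
    obtain ⟨p, hp, rfl⟩ := Finset.mem_image.mp hp'
    obtain ⟨q, hq, rfl⟩ := Finset.mem_image.mp hq'
    have bp := mem_board.mp (hQb hp); have bq := mem_board.mp (hQb hq)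
    have he2 : n + 1 - p.2 = n + 1 - q.2 := he
    have : p.2 = q.2 := by omega
    rw [hcol p hp q hq this]
  · intro p' hp' q' hq' he
    obtain ⟨p, hp, rfl⟩ := Finset.mem_image.mp hp'
    obtain ⟨q, hq, rfl⟩ := Finset.mem_image.mp hq'
    have bp := mem_board.mp (hQb hp); have bq := mem_board.mp (hQb hq)
    have he2 : (n + 1 - p.2) + n - p.1 = (n + 1 - q.2) + n - q.1 := he
    have : p.1 + p.2 - 1 = q.1 + q.2 - 1 := by omega
    rw [hanti p hp q hq this]
  · intro p' hp' q' hq' he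
    obtain ⟨p, hp, rfl⟩ := Finset.mem_image.mp hp'
    obtain ⟨q, hq, rfl⟩ := Finset.mem_image.mp hq'
    have bp := mem_board.mp (hQb hp); have bq := mem_board.mp (hQb hq)
    have he2 : p.1 + (n + 1 - p.2) - 1 = q.1 + (n + 1 - q.2) - 1 := he
    have : p.2 + n - p.1 = q.2 + n - q.1 := by omega
    rw [hdiag p hp q hq this]
  · have e1 : rAct n (sAct n Q) = Q.image (fun p => (p.2, p.1)) := by
      rw [rAct_eq, sAct_eq, Finset.image_image]
      apply Finset.image_congr
      intro p hp
      have bp := mem_board.mp (hQb hp)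
      show (n + 1 - (n + 1 - p.2), p.1) = (p.2, p.1)
      exact Prod.ext_iff.mpr ⟨by omega, rfl⟩
    have e2 : sAct n Q = Q.image (fun p => (p.2, p.1)) := by
      conv_lhs => rw [← hr, ← hr, ← hr]
      rw [sAct_eq, rAct_eq, rAct_eq, rAct_eq, Finset.image_image,
        Finset.image_image, Finset.image_image]
      apply Finset.image_congr
      intro p hp
      have bp := mem_board.mp (hQb hp)
      show (n + 1 - (n + 1 - p.2), n + 1 - (n + 1 - p.1)) = (p.2, p.1)
      exact Prod.ext_iff.mpr ⟨by omega, by omega⟩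
    exact e1.trans e2.symm

lemma exists_row_queen (hQb : Q ⊆ board n) (hcard : Q.card = n)
    (hrow : ∀ p ∈ Q, ∀ q ∈ Q, p.1 = q.1 → p = q) {i : ℕ} (hi : 1 ≤ i ∧ i ≤ n) :
    ∃ j, (i, j) ∈ Q := by
  have hinj : Set.InjOn Prod.fst Q := fun p hp q hq hpq => hrow p hp q hq hpq
  have hc : (Q.image Prod.fst).card = n := by
    rw [Finset.card_image_of_injOn hinj, hcard]
  have hsub : Q.image Prod.fst ⊆ Finset.Icc 1 n :=
    Finset.image_subset_iff.mpr fun p hp => Finset.mem_Icc.mpr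
      (by have := mem_board.mp (hQb hp); omega)
  have heq : Q.image Prod.fst = Finset.Icc 1 n :=
    Finset.eq_of_subset_of_card_le hsub (by rw [hc, Nat.card_Icc]; omega)
  have : i ∈ Q.image Prod.fst := by rw [heq]; exact Finset.mem_Icc.mpr hi
  obtain ⟨p, hp, hpi⟩ := Finset.mem_image.mp this
  refine ⟨p.2, ?_⟩
  have : (i, p.2) = p := Prod.ext_iff.mpr ⟨hpi.symm, rfl⟩
  rw [this]; exact hp

lemma sAct_ne (h : Q ∈ Fr n) (hn : 2 ≤ n) : sAct n Q ≠ Q := by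
  obtain ⟨⟨hQb, hcard, hrow, hcol, hdiag, hanti⟩, hr⟩ := mem_Fr.mp h
  intro he
  obtain ⟨a, ha⟩ := exists_row_queen hQb hcard hrow (i := 1) ⟨le_refl 1, by omega⟩
  have hb1 : 1 ≤ (1 : ℕ) ∧ (1 : ℕ) ≤ n ∧ 1 ≤ a ∧ a ≤ n := mem_board.mp (hQb ha)
  have h2 : (1, n + 1 - a) ∈ Q := by
    rw [← he]; exact Finset.mem_image_of_mem _ ha
  have h3 : (1, a) = (1, n + 1 - a) := hrow _ ha _ h2 rfl
  have h4 : a = n + 1 - a := congrArg Prod.snd h3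
  obtain ⟨_, h5, _⟩ := mem_rot hr hQb ha
  -- h5 : (n + 1 - 1, n + 1 - a) ∈ Q
  have h6 : (1, a) = (n + 1 - 1, n + 1 - a) := hcol _ ha _ h5 (by show a = n + 1 - a; omega)
  have h7 : (1 : ℕ) = n + 1 - 1 := congrArg Prod.fst h6
  omega

lemma tAct_ne (h : Q ∈ Fr n) (hn : 2 ≤ n) : tAct n Q ≠ Q := by
  obtain ⟨⟨hQb, hcard, hrow, hcol, hdiag, hanti⟩, hr⟩ := mem_Fr.mp h
  intro he
  obtain ⟨a, ha⟩ := exists_row_queen hQb hcard hrow (i := 1) ⟨le_refl 1, by omega⟩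
  have hb1 : 1 ≤ (1 : ℕ) ∧ (1 : ℕ) ≤ n ∧ 1 ≤ a ∧ a ≤ n := mem_board.mp (hQb ha)
  have h2 : (1, n + 1 - a) ∈ Q := by
    rw [← he]
    have : fT n (1, a) = (1, n + 1 - a) := by unfold fT; rw [if_pos (Or.inl rfl)]
    rw [← this]
    exact Finset.mem_image_of_mem _ ha
  have h3 : (1, a) = (1, n + 1 - a) := hrow _ ha _ h2 rfl
  have h4 : a = n + 1 - a := congrArg Prod.snd h3
  obtain ⟨_, h5, _⟩ := mem_rot hr hQb ha
  have h6 : (1, a) = (n + 1 - 1, n + 1 - a) := hcol _ ha _ h5 (by show a = n + 1 - a; omega)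
  have h7 : (1 : ℕ) = n + 1 - 1 := congrArg Prod.fst h6
  omega

set_option maxHeartbeats 1000000 in
lemma tAct_ne_sAct (h : Q ∈ Fr n) (hn : 6 ≤ n) : tAct n Q ≠ sAct n Q := by
  obtain ⟨⟨hQb, hcard, hrow, hcol, hdiag, hanti⟩, hr⟩ := mem_Fr.mp h
  intro he
  -- every interior queen lies in the middle column
  have key : ∀ p ∈ Q, ¬(p.1 = 1 ∨ p.1 = n ∨ p.2 = 1 ∨ p.2 = n) → 2 * p.2 = n + 1 := by
    intro p hp hbp
    have bp := mem_board.mp (hQb hp)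
    have h1 : p ∈ sAct n Q := by
      rw [← he]
      have : fT n p = p := by unfold fT; rw [if_neg hbp]
      rw [← this]
      exact Finset.mem_image_of_mem _ hp
    obtain ⟨q, hq, hqe⟩ := Finset.mem_image.mp h1
    have bq := mem_board.mp (hQb hq)
    have e1 : q.1 = p.1 := by rw [← hqe]
    have e2 : n + 1 - q.2 = p.2 := by rw [← hqe]
    have h2 : q = p := hrow _ hq _ hp e1
    have e3 : q.2 = p.2 := by rw [h2]
    omega
  -- at most one interior queen, at most four border queens
  have hint : (Q.filter (fun p => ¬(p.1 = 1 ∨ p.1 = n ∨ p.2 = 1 ∨ p.2 = n))).card ≤ 1 := by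
    rw [Finset.card_le_one]
    intro p hp q hq
    rw [Finset.mem_filter] at hp hq
    have k1 := key p hp.1 hp.2
    have k2 := key q hq.1 hq.2
    exact hcol p hp.1 q hq.1 (by omega)
  have hb1 : (Q.filter (fun p => p.1 = 1)).card ≤ 1 := by
    rw [Finset.card_le_one]
    intro p hp q hq
    rw [Finset.mem_filter] at hp hq
    exact hrow p hp.1 q hq.1 (by rw [hp.2, hq.2])
  have hb2 : (Q.filter (fun p => p.1 = n ∧ ¬ p.1 = 1)).card ≤ 1 := by
    rw [Finset.card_le_one]
    intro p hp q hq
    rw [Finset.mem_filter] at hp hq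
    exact hrow p hp.1 q hq.1 (by rw [hp.2.1, hq.2.1])
  have hb3 : (Q.filter (fun p => p.2 = 1 ∧ ¬(p.1 = 1 ∨ p.1 = n))).card ≤ 1 := by
    rw [Finset.card_le_one]
    intro p hp q hq
    rw [Finset.mem_filter] at hp hq
    exact hcol p hp.1 q hq.1 (by rw [hp.2.1, hq.2.1])
  have hb4 : (Q.filter (fun p => p.2 = n ∧ ¬(p.1 = 1 ∨ p.1 = n ∨ p.2 = 1))).card ≤ 1 := by
    rw [Finset.card_le_one]
    intro p hp q hq
    rw [Finset.mem_filter] at hp hq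
    exact hcol p hp.1 q hq.1 (by rw [hp.2.1, hq.2.1])
  have hcover : Q.card ≤ 5 := by
    have hsub : Q ⊆ (Q.filter (fun p => p.1 = 1)) ∪
        (Q.filter (fun p => p.1 = n ∧ ¬ p.1 = 1)) ∪
        (Q.filter (fun p => p.2 = 1 ∧ ¬(p.1 = 1 ∨ p.1 = n))) ∪
        (Q.filter (fun p => p.2 = n ∧ ¬(p.1 = 1 ∨ p.1 = n ∨ p.2 = 1))) ∪
        (Q.filter (fun p => ¬(p.1 = 1 ∨ p.1 = n ∨ p.2 = 1 ∨ p.2 = n))) := by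
      intro p hp
      simp only [Finset.mem_union, Finset.mem_filter, hp, true_and]
      omega
    have h12 := Finset.card_union_le (Q.filter (fun p => p.1 = 1)) (Q.filter (fun p => p.1 = n ∧ ¬ p.1 = 1))
    have h123 := Finset.card_union_le ((Q.filter (fun p => p.1 = 1)) ∪ (Q.filter (fun p => p.1 = n ∧ ¬ p.1 = 1))) (Q.filter (fun p => p.2 = 1 ∧ ¬(p.1 = 1 ∨ p.1 = n)))
    have h1234 := Finset.card_union_le ((Q.filter (fun p => p.1 = 1)) ∪ (Q.filter (fun p => p.1 = n ∧ ¬ p.1 = 1)) ∪ (Q.filter (fun p => p.2 = 1 ∧ ¬(p.1 = 1 ∨ p.1 = n)))) (Q.filter (fun p => p.2 = n ∧ ¬(p.1 = 1 ∨ p.1 = n ∨ p.2 = 1)))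
    have h12345 := Finset.card_union_le ((Q.filter (fun p => p.1 = 1)) ∪ (Q.filter (fun p => p.1 = n ∧ ¬ p.1 = 1)) ∪ (Q.filter (fun p => p.2 = 1 ∧ ¬(p.1 = 1 ∨ p.1 = n))) ∪ (Q.filter (fun p => p.2 = n ∧ ¬(p.1 = 1 ∨ p.1 = n ∨ p.2 = 1)))) (Q.filter (fun p => ¬(p.1 = 1 ∨ p.1 = n ∨ p.2 = 1 ∨ p.2 = n)))
    have hQle := Finset.card_le_card hsub
    omega
  omega


set_option maxHeartbeats 1000000 in
lemma t_mem_Fr (h : Q ∈ Fr n) : tAct n Q ∈ Fr n := by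
  obtain ⟨⟨hQb, hcard, hrow, hcol, hdiag, hanti⟩, hr⟩ := mem_Fr.mp h
  have htb : tAct n Q ⊆ board n := tAct_board hQb
  refine mem_Fr.mpr ⟨⟨htb, by rw [tAct_card hQb, hcard], ?_, ?_, ?_, ?_⟩, ?_⟩
  · -- rows
    intro p' hp' q' hq' he
    obtain ⟨p, hp, rfl⟩ := Finset.mem_image.mp hp'
    obtain ⟨q, hq, rfl⟩ := Finset.mem_image.mp hq'
    rw [fT_fst, fT_fst] at he
    rw [hrow p hp q hq he]
  · -- columns
    intro p' hp' q' hq' he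
    obtain ⟨p, hp, rfl⟩ := Finset.mem_image.mp hp'
    obtain ⟨q, hq, rfl⟩ := Finset.mem_image.mp hq'
    obtain ⟨i, j⟩ := p
    obtain ⟨k, l⟩ := q
    have bp : 1 ≤ i ∧ i ≤ n ∧ 1 ≤ j ∧ j ≤ n := mem_board.mp (hQb hp)
    have bq : 1 ≤ k ∧ k ≤ n ∧ 1 ≤ l ∧ l ≤ n := mem_board.mp (hQb hq)
    obtain ⟨o1, o2, o3⟩ := mem_rot hr hQb hp
    obtain ⟨u1, u2, u3⟩ := mem_rot hr hQb hq
    suffices hs : ((i, j) : ℕ × ℕ) = (k, l) by rw [hs]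
    by_cases hbp : (i = 1 ∨ i = n ∨ j = 1 ∨ j = n) <;>
      by_cases hbq : (k = 1 ∨ k = n ∨ l = 1 ∨ l = n)
    · rw [show fT n (i, j) = (i, n + 1 - j) from by unfold fT; rw [if_pos hbp],
        show fT n (k, l) = (k, n + 1 - l) from by unfold fT; rw [if_pos hbq]] at he
      have he2 : n + 1 - j = n + 1 - l := he
      exact hcol _ hp _ hq (by show j = l; omega)
    · rw [show fT n (i, j) = (i, n + 1 - j) from by unfold fT; rw [if_pos hbp],
        show fT n (k, l) = (k, l) from by unfold fT; rw [if_neg hbq]] at he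
      have he2 : n + 1 - j = l := he
      have h4 : ((k, l) : ℕ × ℕ) = (n + 1 - i, n + 1 - j) :=
        hcol _ hq _ o2 (by show l = n + 1 - j; omega)
      have h5 : k = n + 1 - i := (Prod.ext_iff.mp h4).1
      exfalso; omega
    · rw [show fT n (i, j) = (i, j) from by unfold fT; rw [if_neg hbp],
        show fT n (k, l) = (k, n + 1 - l) from by unfold fT; rw [if_pos hbq]] at he
      have he2 : j = n + 1 - l := he
      have h4 : ((i, j) : ℕ × ℕ) = (n + 1 - k, n + 1 - l) :=
        hcol _ hp _ u2 (by show j = n + 1 - l; omega)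
      have h5 : i = n + 1 - k := (Prod.ext_iff.mp h4).1
      exfalso; omega
    · rw [show fT n (i, j) = (i, j) from by unfold fT; rw [if_neg hbp],
        show fT n (k, l) = (k, l) from by unfold fT; rw [if_neg hbq]] at he
      exact hcol _ hp _ hq he
  · -- diagonals
    intro p' hp' q' hq' he
    obtain ⟨p, hp, rfl⟩ := Finset.mem_image.mp hp'
    obtain ⟨q, hq, rfl⟩ := Finset.mem_image.mp hq'
    obtain ⟨i, j⟩ := p
    obtain ⟨k, l⟩ := q
    have bp : 1 ≤ i ∧ i ≤ n ∧ 1 ≤ j ∧ j ≤ n := mem_board.mp (hQb hp)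
    have bq : 1 ≤ k ∧ k ≤ n ∧ 1 ≤ l ∧ l ≤ n := mem_board.mp (hQb hq)
    obtain ⟨o1, o2, o3⟩ := mem_rot hr hQb hp
    obtain ⟨u1, u2, u3⟩ := mem_rot hr hQb hq
    suffices hs : ((i, j) : ℕ × ℕ) = (k, l) by rw [hs]
    by_cases hbp : (i = 1 ∨ i = n ∨ j = 1 ∨ j = n) <;>
      by_cases hbq : (k = 1 ∨ k = n ∨ l = 1 ∨ l = n)
    · rw [show fT n (i, j) = (i, n + 1 - j) from by unfold fT; rw [if_pos hbp],
        show fT n (k, l) = (k, n + 1 - l) from by unfold fT; rw [if_pos hbq]] at he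
      have he2 : (n + 1 - j) + n - i = (n + 1 - l) + n - k := he
      exact hanti _ hp _ hq (by show i + j - 1 = k + l - 1; omega)
    · rw [show fT n (i, j) = (i, n + 1 - j) from by unfold fT; rw [if_pos hbp],
        show fT n (k, l) = (k, l) from by unfold fT; rw [if_neg hbq]] at he
      have he2 : (n + 1 - j) + n - i = l + n - k := he
      have h4 : ((k, l) : ℕ × ℕ) = (j, n + 1 - i) :=
        hdiag _ hq _ o3 (by show l + n - k = (n + 1 - i) + n - j; omega)
      have h5 : k = j := (Prod.ext_iff.mp h4).1
      have h6 : l = n + 1 - i := (Prod.ext_iff.mp h4).2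
      exfalso; omega
    · rw [show fT n (i, j) = (i, j) from by unfold fT; rw [if_neg hbp],
        show fT n (k, l) = (k, n + 1 - l) from by unfold fT; rw [if_pos hbq]] at he
      have he2 : j + n - i = (n + 1 - l) + n - k := he
      have h4 : ((i, j) : ℕ × ℕ) = (l, n + 1 - k) :=
        hdiag _ hp _ u3 (by show j + n - i = (n + 1 - k) + n - l; omega)
      have h5 : i = l := (Prod.ext_iff.mp h4).1
      have h6 : j = n + 1 - k := (Prod.ext_iff.mp h4).2
      exfalso; omega
    · rw [show fT n (i, j) = (i, j) from by unfold fT; rw [if_neg hbp],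
        show fT n (k, l) = (k, l) from by unfold fT; rw [if_neg hbq]] at he
      exact hdiag _ hp _ hq he
  · -- anti-diagonals
    intro p' hp' q' hq' he
    obtain ⟨p, hp, rfl⟩ := Finset.mem_image.mp hp'
    obtain ⟨q, hq, rfl⟩ := Finset.mem_image.mp hq'
    obtain ⟨i, j⟩ := p
    obtain ⟨k, l⟩ := q
    have bp : 1 ≤ i ∧ i ≤ n ∧ 1 ≤ j ∧ j ≤ n := mem_board.mp (hQb hp)
    have bq : 1 ≤ k ∧ k ≤ n ∧ 1 ≤ l ∧ l ≤ n := mem_board.mp (hQb hq)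
    obtain ⟨o1, o2, o3⟩ := mem_rot hr hQb hp
    obtain ⟨u1, u2, u3⟩ := mem_rot hr hQb hq
    suffices hs : ((i, j) : ℕ × ℕ) = (k, l) by rw [hs]
    by_cases hbp : (i = 1 ∨ i = n ∨ j = 1 ∨ j = n) <;>
      by_cases hbq : (k = 1 ∨ k = n ∨ l = 1 ∨ l = n)
    · rw [show fT n (i, j) = (i, n + 1 - j) from by unfold fT; rw [if_pos hbp],
        show fT n (k, l) = (k, n + 1 - l) from by unfold fT; rw [if_pos hbq]] at he
      have he2 : i + (n + 1 - j) - 1 = k + (n + 1 - l) - 1 := he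
      exact hdiag _ hp _ hq (by show j + n - i = l + n - k; omega)
    · rw [show fT n (i, j) = (i, n + 1 - j) from by unfold fT; rw [if_pos hbp],
        show fT n (k, l) = (k, l) from by unfold fT; rw [if_neg hbq]] at he
      have he2 : i + (n + 1 - j) - 1 = k + l - 1 := he
      have h4 : ((k, l) : ℕ × ℕ) = (n + 1 - j, i) :=
        hanti _ hq _ o1 (by show k + l - 1 = (n + 1 - j) + i - 1; omega)
      have h5 : k = n + 1 - j := (Prod.ext_iff.mp h4).1
      have h6 : l = i := (Prod.ext_iff.mp h4).2
      exfalso; omega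
    · rw [show fT n (i, j) = (i, j) from by unfold fT; rw [if_neg hbp],
        show fT n (k, l) = (k, n + 1 - l) from by unfold fT; rw [if_pos hbq]] at he
      have he2 : i + j - 1 = k + (n + 1 - l) - 1 := he
      have h4 : ((i, j) : ℕ × ℕ) = (n + 1 - l, k) :=
        hanti _ hp _ u1 (by show i + j - 1 = (n + 1 - l) + k - 1; omega)
      have h5 : i = n + 1 - l := (Prod.ext_iff.mp h4).1
      have h6 : j = k := (Prod.ext_iff.mp h4).2
      exfalso; omega
    · rw [show fT n (i, j) = (i, j) from by unfold fT; rw [if_neg hbp],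
        show fT n (k, l) = (k, l) from by unfold fT; rw [if_neg hbq]] at he
      exact hanti _ hp _ hq he
  · -- rotation invariance
    have hsub : rAct n (tAct n Q) ⊆ tAct n Q := by
      rw [rAct_eq]
      intro x hx
      obtain ⟨y, hy, rfl⟩ := Finset.mem_image.mp hx
      obtain ⟨p, hp, rfl⟩ := Finset.mem_image.mp hy
      obtain ⟨i, j⟩ := p
      have bp : 1 ≤ i ∧ i ≤ n ∧ 1 ≤ j ∧ j ≤ n := mem_board.mp (hQb hp)
      obtain ⟨o1, o2, o3⟩ := mem_rot hr hQb hp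
      by_cases hbp : (i = 1 ∨ i = n ∨ j = 1 ∨ j = n)
      · refine Finset.mem_image.mpr ⟨(j, n + 1 - i), o3, ?_⟩
        rw [show fT n (i, j) = (i, n + 1 - j) from by unfold fT; rw [if_pos hbp],
          show fT n (j, n + 1 - i) = (j, n + 1 - (n + 1 - i)) from by
            unfold fT; rw [if_pos (by omega)]]
        show ((j, n + 1 - (n + 1 - i)) : ℕ × ℕ) = (n + 1 - (n + 1 - j), i)
        exact Prod.ext_iff.mpr ⟨by omega, by omega⟩
      · refine Finset.mem_image.mpr ⟨(n + 1 - j, i), o1, ?_⟩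
        rw [show fT n (i, j) = (i, j) from by unfold fT; rw [if_neg hbp],
          show fT n (n + 1 - j, i) = (n + 1 - j, i) from by
            unfold fT; rw [if_neg (by omega)]]
        rfl
    have hinj : Set.InjOn (fR n) (tAct n Q) := by
      intro a ha b hb' hab
      have ba := mem_board.mp (htb ha)
      have bb := mem_board.mp (htb hb')
      have h1 : n + 1 - a.2 = n + 1 - b.2 := (Prod.ext_iff.mp hab).1
      have h2 : a.1 = b.1 := (Prod.ext_iff.mp hab).2
      exact Prod.ext_iff.mpr ⟨h2, by omega⟩
    have hcards : (tAct n Q).card ≤ (rAct n (tAct n Q)).card := by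
      rw [rAct_eq, Finset.card_image_of_injOn hinj]
    exact Finset.eq_of_subset_of_card_le hsub hcards

end acts

lemma board_of_mem_Fr {n : ℕ} {Q : Finset (ℕ × ℕ)} (h : Q ∈ Fr n) : Q ⊆ board n :=
  (mem_Fr.mp h).1.1

set_option maxHeartbeats 1000000 in
lemma closed_dvd {n : ℕ} (hn : 6 ≤ n) :
    ∀ (k : ℕ) (S : Finset (Finset (ℕ × ℕ))), S.card = k → S ⊆ Fr n →
      (∀ Q ∈ S, sAct n Q ∈ S ∧ tAct n Q ∈ S) → 4 ∣ S.card := by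
  intro k
  induction k using Nat.strong_induction_on with
  | _ k ih =>
    intro S hk hsub hcl
    rcases S.eq_empty_or_nonempty with rfl | ⟨Q, hQS⟩
    · simp
    have hQF : Q ∈ Fr n := hsub hQS
    have hQb : Q ⊆ board n := board_of_mem_Fr hQF
    have hsS : sAct n Q ∈ S := (hcl Q hQS).1
    have htS : tAct n Q ∈ S := (hcl Q hQS).2
    have htsS : tAct n (sAct n Q) ∈ S := (hcl _ hsS).2
    have hsF : sAct n Q ∈ Fr n := hsub hsS
    have hsb : sAct n Q ⊆ board n := board_of_mem_Fr hsF
    have d1 : sAct n Q ≠ Q := sAct_ne hQF (by omega)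
    have d2 : tAct n Q ≠ Q := tAct_ne hQF (by omega)
    have d3 : tAct n Q ≠ sAct n Q := tAct_ne_sAct hQF hn
    have d4 : tAct n (sAct n Q) ≠ Q := by
      intro hh
      have e := congrArg (tAct n) hh
      rw [tAct_tAct hsb] at e
      exact d3 e.symm
    have d5 : tAct n (sAct n Q) ≠ sAct n Q := tAct_ne hsF (by omega)
    have d6 : tAct n (sAct n Q) ≠ tAct n Q := by
      intro hh
      have e := congrArg (tAct n) hh
      rw [tAct_tAct hsb, tAct_tAct hQb] at e
      exact d1 e
    set O : Finset (Finset (ℕ × ℕ)) :=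
      {Q, sAct n Q, tAct n Q, tAct n (sAct n Q)} with hO
    have hOsub : O ⊆ S := by
      intro R hR
      simp only [hO, Finset.mem_insert, Finset.mem_singleton] at hR
      rcases hR with rfl | rfl | rfl | rfl
      exacts [hQS, hsS, htS, htsS]
    have hOcard : O.card = 4 := by
      rw [hO,
        Finset.card_insert_of_notMem (by
          simp only [Finset.mem_insert, Finset.mem_singleton]
          push_neg
          exact ⟨Ne.symm d1, Ne.symm d2, Ne.symm d4⟩),
        Finset.card_insert_of_notMem (by
          simp only [Finset.mem_insert, Finset.mem_singleton]
          push_neg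
          exact ⟨Ne.symm d3, Ne.symm d5⟩),
        Finset.card_insert_of_notMem (by
          simp only [Finset.mem_singleton]
          exact Ne.symm d6),
        Finset.card_singleton]
    have h4le : 4 ≤ S.card := hOcard ▸ Finset.card_le_card hOsub
    have hS' : (S \ O).card = S.card - 4 := by
      rw [Finset.card_sdiff_of_subset hOsub, hOcard]
    have hcl' : ∀ R ∈ S \ O, sAct n R ∈ S \ O ∧ tAct n R ∈ S \ O := by
      intro R hR
      obtain ⟨hRS, hRO⟩ := Finset.mem_sdiff.mp hR
      have hRF : R ∈ Fr n := hsub hRS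
      have hRb : R ⊆ board n := board_of_mem_Fr hRF
      constructor
      · refine Finset.mem_sdiff.mpr ⟨(hcl R hRS).1, ?_⟩
        intro hmem
        simp only [hO, Finset.mem_insert, Finset.mem_singleton] at hmem
        apply hRO
        simp only [hO, Finset.mem_insert, Finset.mem_singleton]
        rcases hmem with hh | hh | hh | hh
        · right; left
          rw [← hh, sAct_sAct hRb]
        · left
          have e := congrArg (sAct n) hh
          rwa [sAct_sAct hRb, sAct_sAct hQb] at e
        · right; right; right
          have e := congrArg (sAct n) hh
          rw [sAct_sAct hRb] at e
          rw [e, ← tAct_sAct_comm hQb]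
        · right; right; left
          have e := congrArg (sAct n) hh
          rw [sAct_sAct hRb] at e
          rw [e, ← tAct_sAct_comm hsb, sAct_sAct hQb]
      · refine Finset.mem_sdiff.mpr ⟨(hcl R hRS).2, ?_⟩
        intro hmem
        simp only [hO, Finset.mem_insert, Finset.mem_singleton] at hmem
        apply hRO
        simp only [hO, Finset.mem_insert, Finset.mem_singleton]
        rcases hmem with hh | hh | hh | hh
        · right; right; left
          rw [← hh, tAct_tAct hRb]
        · right; right; right
          have e := congrArg (tAct n) hh
          rw [tAct_tAct hRb] at e
          rw [e]
        · left
          have e := congrArg (tAct n) hh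
          rwa [tAct_tAct hRb, tAct_tAct hQb] at e
        · right; left
          have e := congrArg (tAct n) hh
          rwa [tAct_tAct hRb, tAct_tAct hsb] at e
    have hdvd := ih (S.card - 4) (by omega) (S \ O) hS'
      (fun R hR => hsub (Finset.mem_sdiff.mp hR).1) hcl'
    rw [hS'] at hdvd
    omega

end QA

/-- For every `n ≥ 6`, the number of `n`-queens configurations fixed by the 90°
rotation `r` is divisible by `4`. -/
theorem Fr_card_div_four (n : ℕ) (hn : 6 ≤ n) : 4 ∣ (Fr n).card := by
  exact QA.closed_dvd hn (Fr n).card (Fr n) rfl (Finset.Subset.refl _)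
    (fun _ hQ => ⟨QA.s_mem_Fr hQ, QA.t_mem_Fr hQ⟩)
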